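/- arXiv:2410.09257 — 3 statements merged into one kernel-verified Lean document; each statement's English description precedes it below -/
import Mathlib

section
/- Consider the one-person infinite shortest-path game on a caterpillar graph: positions are v₀, v₁, v₂, ..., with at each vₖ a choice either to move to vₖ₊₁ at cost 1/4ᵏ, or to terminate at cost 2/4ᵏ. The total cost of the play that terminates after k steps along the main path equals 1 + (2/3)(1/2 + 4^{−k}), which is strictly decreasing in k. Consequently, no terminating play achieves the infimum of the costs of all terminating plays, i.e., the game has no shortest terminating play. -/
open Finset

/-- The total cost of the terminating play after `k` steps along the main path of the
caterpillar: local costs `1, 1/4, …, 1/4^{k-1}` along the path and `2/4^k` for the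
terminating move. -/
noncomputable def catCost (k : ℕ) : ℝ :=
  (∑ i ∈ Finset.range k, (1 / 4 : ℝ) ^ i) + 2 * (1 / 4 : ℝ) ^ k

lemma StrictAnti.not_exists_forall_le {α β : Type*} [Preorder α] [NoMaxOrder α] [Preorder β]
    {f : α → β} (hf : StrictAnti f) : ¬ ∃ a, ∀ b, f a ≤ f b := by
  rintro ⟨a, ha⟩
  obtain ⟨b, hab⟩ := exists_gt a
  exact (hf hab).not_ge (ha b)

lemma catCost_eq (k : ℕ) : catCost k = 1 + (2 / 3) * (1 / 2 + (1 / 4 : ℝ) ^ k) := by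
  rw [catCost, geom_sum_eq (by norm_num)]
  ring

lemma catCost_strictAnti : StrictAnti catCost := by
  intro a b hab
  have hpow := pow_right_strictAnti₀ (by norm_num : (0 : ℝ) < 1 / 4) (by norm_num) hab
  simp only [catCost_eq]
  linarith

/-- the cost of the play terminating after `k` steps equals
`1 + (2/3)(1/2 + 4^{−k})`, this is strictly decreasing in `k`, and consequently no
terminating play achieves the infimum: the one-person game has no shortest terminating
play. -/
theorem caterpillar_no_shortest_play :
    (∀ k : ℕ, catCost k = 1 + (2 / 3) * (1 / 2 + (1 / 4 : ℝ) ^ k)) ∧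
    StrictAnti catCost ∧
    ¬ ∃ k : ℕ, ∀ j : ℕ, catCost k ≤ catCost j :=
  ⟨catCost_eq, catCost_strictAnti, catCost_strictAnti.not_exists_forall_le⟩
end

section
/- Let G = (V, E) be a finite directed graph, V partitioned into V₁, V₂ and a terminal t, with positive arc lengths r₁, r₂ : E → ℝ satisfying for each i ∈ {1,2}: (L1) for every u ∈ Vᵢ, min over arcs (u,v) leaving u of rᵢ(u,v) equals 0; (L2) for every u ∈ Vᵢ there exists an arc (u,v) with rᵢ(u,v) = 0 and r_{3−i}(u,v) ≤ 0; (L3) for every u ∈ Vᵢ there exists an arc (u,v) with r_{3−i}(u,v) = 0. Assume also every vertex has a directed path to t, and every directed cycle has positive total rᵢ-length for both i. Then the two-person shortest-path game with these data has a terminal Nash equilibrium in pure stationary strategies. -/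
/-!
Let `g` move along an (L2)-arc of the owner at every vertex other than `t`. Every `g`-step costs
both players at most `0`, so, cycles being positive, the `g`-play from `s` cannot cycle and reaches
`t`. The equilibrium follows `g` on this play and, off it, each player answers with an (L3)-arc,
which costs the opponent `0`. A deviating player pays at least `0` on each of their own moves (L1)
and on each of the opponent's moves off the play, so every negative step of the deviating play is a
step of the equilibrium play, taken at most once; as all those steps are nonpositive, the deviation
cannot be cheaper.
-/

open scoped Classical

variable {V : Type*}

/-- The total length of a walk, given as a list of vertices. -/
def pathCost (r : V → V → ℝ) (p : List V) : ℝ :=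
  ((p.zip p.tail).map fun q => r q.1 q.2).sum

/-- A directed cycle, represented as a closed walk `v₀ v₁ ⋯ vₖ` with `v₀ = vₖ`,
whose vertices are distinct except for the first and last. -/
def IsCycleL (E : V → V → Prop) (p : List V) : Prop :=
  2 ≤ p.length ∧ List.Chain' E p ∧ p.head? = p.getLast? ∧ p.dropLast.Nodup
open scoped Classical

variable {V : Type*}

/-- A terminal position: a vertex with no outgoing arcs. -/
def IsTerm (E : V → V → Prop) (v : V) : Prop := ∀ w, ¬ E v w

/-- The cost, for a player with local costs `r`, of the play starting at `s` determined by
the combined successor function `f`: the sum of the local costs along the play if it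
reaches a terminal, and `+∞` otherwise. -/
noncomputable def playCost (E : V → V → Prop) (r : V → V → ℝ) (f : V → V) (s : V) : EReal :=
  if h : ∃ n, IsTerm E (f^[n] s) then
    (((Finset.range (Nat.find h)).sum fun i => r (f^[i] s) (f^[i + 1] s) : ℝ) : EReal)
  else ⊤

/-- The combined successor function of a strategy pair. -/
noncomputable def nextFun (V1 : Set V) (σ1 σ2 : V → V) : V → V :=
  fun u => if u ∈ V1 then σ1 u else σ2 u

/-- `(σ1, σ2)` is a Nash equilibrium (in pure stationary strategies) of the two-person
shortest-path game: both strategies are legal, and no player can strictly decrease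
their own cost by a unilateral deviation. -/
def IsNE (E : V → V → Prop) (V1 V2 : Set V) (r1 r2 : V → V → ℝ) (s : V)
    (σ1 σ2 : V → V) : Prop :=
  (∀ u ∈ V1, E u (σ1 u)) ∧ (∀ u ∈ V2, E u (σ2 u)) ∧
  (∀ σ1', (∀ u ∈ V1, E u (σ1' u)) →
    playCost E r1 (nextFun V1 σ1 σ2) s ≤ playCost E r1 (nextFun V1 σ1' σ2) s) ∧
  (∀ σ2', (∀ u ∈ V2, E u (σ2' u)) →
    playCost E r2 (nextFun V1 σ1 σ2) s ≤ playCost E r2 (nextFun V1 σ1 σ2') s)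

namespace Function

variable {α : Type*}

theorem exists_iterate_mem_periodicPts [Finite α] (f : α → α) (x : α) :
    ∃ m, f^[m] x ∈ periodicPts f := by
  obtain ⟨m, n, hmn, heq⟩ := Finite.exists_ne_map_eq_of_infinite (f^[·] x)
  wlog hlt : m < n generalizing m n
  · exact this n m hmn.symm heq.symm (by omega)
  refine ⟨m, mk_mem_periodicPts (n := n - m) (by omega) ?_⟩
  rw [IsPeriodicPt, IsFixedPt, ← iterate_add_apply, Nat.sub_add_cancel hlt.le]
  exact heq.symm

theorem iterate_injOn_Iio_of_first_hit {f : α → α} {x : α} {p : α → Prop} {k : ℕ}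
    (hk : p (f^[k] x)) (hkmin : ∀ i < k, ¬ p (f^[i] x)) :
    Set.InjOn (f^[·] x) (Set.Iio k) := by
  intro i hi j hj hij
  simp only [Set.mem_Iio] at hi hj hij
  by_contra hne
  wlog hlt : i < j generalizing i j
  · exact this hij.symm hj hi (Ne.symm hne) (by omega)
  -- the orbit returns to `f^[i] x` after `j - i` steps, so it meets `p` already at time `k - (j - i)`
  have hreturn : f^[k - j + i] x = f^[k] x := by
    rw [iterate_add_apply, hij, ← iterate_add_apply, Nat.sub_add_cancel hj.le]
  exact hkmin (k - j + i) (by omega) (hreturn ▸ hk)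

theorem iterate_eq_iterate_of_eqOn_orbit {f g : α → α} {x : α} {k : ℕ}
    (h : ∀ i < k, f (g^[i] x) = g (g^[i] x)) : ∀ i ≤ k, f^[i] x = g^[i] x := by
  intro i hi
  induction i with
  | zero => rfl
  | succ i ih => rw [iterate_succ_apply', iterate_succ_apply', ih (by omega), h i hi]

end Function

theorem Finset.sum_le_sum_of_neg_imp_mem {ι M : Type*} [AddCommMonoid M] [LinearOrder M]
    [IsOrderedAddMonoid M] {s t : Finset ι} {f g : ι → M} (hf : ∀ i ∈ s, f i ≤ 0)
    (hg : ∀ i ∈ t, g i < 0 → i ∈ s ∧ g i = f i) :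
    ∑ i ∈ s, f i ≤ ∑ i ∈ t, g i := by
  set n := t.filter (g · < 0)
  have hn : ∀ i ∈ n, i ∈ s ∧ g i = f i := fun i hi =>
    hg i (Finset.mem_filter.1 hi).1 (Finset.mem_filter.1 hi).2
  calc ∑ i ∈ s, f i
      ≤ ∑ i ∈ n, f i :=
        Finset.sum_le_sum_of_subset_of_nonpos' (fun i hi => (hn i hi).1) fun i hi _ => hf i hi
    _ = ∑ i ∈ n, g i := Finset.sum_congr rfl fun i hi => (hn i hi).2.symm
    _ ≤ ∑ i ∈ t, g i :=
        Finset.sum_le_sum_of_subset_of_nonneg (Finset.filter_subset _ _)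
          fun i hi hin => not_lt.1 fun hneg => hin (Finset.mem_filter.2 ⟨hi, hneg⟩)

theorem pathCost_cons_cons (r : V → V → ℝ) (a b : V) (l : List V) :
    pathCost r (a :: b :: l) = r a b + pathCost r (b :: l) := by
  simp [pathCost]

theorem pathCost_iterate (r : V → V → ℝ) (g : V → V) (x : V) (n : ℕ) :
    pathCost r (List.iterate g x (n + 1)) = ∑ i ∈ Finset.range n, r (g^[i] x) (g^[i + 1] x) := by
  induction n generalizing x with
  | zero => simp [pathCost]
  | succ n ih =>
    have := ih (g x)
    simp only [List.iterate] at this ⊢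
    rw [pathCost_cons_cons, this, Finset.sum_range_succ']
    simp only [Function.iterate_succ_apply, Function.iterate_zero_apply]
    ring

theorem List.iterate_succ_eq_concat {α : Type*} (f : α → α) (a : α) (n : ℕ) :
    List.iterate f a (n + 1) = List.iterate f a n ++ [f^[n] a] :=
  List.iterate_add f a n 1

theorem isCycleL_iterate_minimalPeriod {E : V → V → Prop} {g : V → V} {x : V}
    (hx : x ∈ Function.periodicPts g) (hE : ∀ i, E (g^[i] x) (g^[i + 1] x)) :
    IsCycleL E (List.iterate g x (Function.minimalPeriod g x + 1)) := by
  have hpos := Function.minimalPeriod_pos_of_mem_periodicPts hx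
  refine ⟨by simp only [List.length_iterate]; omega, ?_, ?_, ?_⟩
  · rw [← List.range_map_iterate]
    exact (List.isChain_map _).2 ((List.isChain_range_succ _ _).2 fun i _ => hE i)
  · rw [show (List.iterate g x _).head? = some x from rfl, List.iterate_succ_eq_concat,
      List.getLast?_concat, Function.iterate_minimalPeriod]
  · rw [List.iterate_succ_eq_concat, List.dropLast_concat, ← List.range_map_iterate]
    exact (List.nodup_range).map_on fun i hi j hj hij =>
      Function.iterate_injOn_Iio_minimalPeriod (List.mem_range.1 hi) (List.mem_range.1 hj) hij

theorem exists_iterate_eq_of_pathCost_pos [Finite V] {E : V → V → Prop} {r : V → V → ℝ}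
    {g : V → V} {t : V} (hg : ∀ v ≠ t, E v (g v) ∧ r v (g v) ≤ 0)
    (hcycle : ∀ c, IsCycleL E c → 0 < pathCost r c) (s : V) : ∃ n, g^[n] s = t := by
  by_contra! hne
  obtain ⟨m, hm⟩ := Function.exists_iterate_mem_periodicPts g s
  set x := g^[m] s
  have hx : ∀ i, g^[i] x ≠ t := fun i => by
    rw [← Function.iterate_add_apply]; exact hne _
  have hpos := hcycle _ <| isCycleL_iterate_minimalPeriod hm fun i => by
    rw [Function.iterate_succ_apply']; exact (hg _ (hx i)).1
  rw [pathCost_iterate] at hpos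
  refine hpos.not_ge (Finset.sum_nonpos fun i _ => ?_)
  rw [Function.iterate_succ_apply']
  exact (hg _ (hx i)).2

noncomputable def playPrefix (f : V → V) (s : V) (k : ℕ) : Finset V :=
  (Finset.range k).image (f^[·] s)

theorem mem_playPrefix {f : V → V} {s v : V} {k : ℕ} :
    v ∈ playPrefix f s k ↔ ∃ i < k, f^[i] s = v := by
  simp [playPrefix]

theorem playPrefix_congr {f g : V → V} {s : V} {k : ℕ} (h : ∀ i ≤ k, f^[i] s = g^[i] s) :
    playPrefix f s k = playPrefix g s k :=
  Finset.image_congr fun i hi => h i (Finset.mem_range.1 hi).le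

variable {E : V → V → Prop}

theorem playCost_eq_sum_playPrefix {r : V → V → ℝ} {f : V → V} {s : V} {k : ℕ}
    (hk : IsTerm E (f^[k] s)) (hkmin : ∀ i < k, ¬ IsTerm E (f^[i] s)) :
    playCost E r f s = ((∑ v ∈ playPrefix f s k, r v (f v) : ℝ) : EReal) := by
  have h : ∃ n, IsTerm E (f^[n] s) := ⟨k, hk⟩
  rw [playCost, dif_pos h, (Nat.find_eq_iff h).2 ⟨hk, hkmin⟩, playPrefix, Finset.sum_image]
  · simp only [Function.iterate_succ_apply']
  · rw [Finset.coe_range]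
    exact Function.iterate_injOn_Iio_of_first_hit hk hkmin

theorem playCost_le_playCost_of_negative_steps {r : V → V → ℝ} {f f' : V → V} {s : V} {k : ℕ}
    (hk : IsTerm E (f^[k] s))
    (hplay : ∀ i < k, ¬ IsTerm E (f^[i] s) ∧ r (f^[i] s) (f (f^[i] s)) ≤ 0)
    (hdev : ∀ v, ¬ IsTerm E v → 0 ≤ r v (f' v) ∨ v ∈ playPrefix f s k ∧ f' v = f v) :
    playCost E r f s ≤ playCost E r f' s := by
  by_cases h' : ∃ m, IsTerm E (f'^[m] s)
  swap
  · simp [playCost, h']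
  rw [playCost_eq_sum_playPrefix hk fun i hi => (hplay i hi).1,
    playCost_eq_sum_playPrefix (Nat.find_spec h') fun j => Nat.find_min h']
  refine EReal.coe_le_coe_iff.2 (Finset.sum_le_sum_of_neg_imp_mem ?_ ?_)
  · intro v hv
    obtain ⟨i, hi, rfl⟩ := mem_playPrefix.1 hv
    exact (hplay i hi).2
  · intro v hv hneg
    obtain ⟨j, hj, rfl⟩ := mem_playPrefix.1 hv
    rcases hdev _ (Nat.find_min h' hj) with hnonneg | ⟨hmem, heq⟩
    · exact absurd hneg hnonneg.not_gt
    · exact ⟨hmem, by rw [heq]⟩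

section Deviation

variable {V1 V2 : Set V} {r : V → V → ℝ} {σ1 σ2 : V → V} {s : V} {k : ℕ}

theorem playCost_le_playCost_nextFun_left {σ1' : V → V}
    (hplayer : ∀ v, ¬ IsTerm E v → v ∈ V1 ∨ v ∈ V2)
    (hk : IsTerm E ((nextFun V1 σ1 σ2)^[k] s))
    (hplay : ∀ i < k, ¬ IsTerm E ((nextFun V1 σ1 σ2)^[i] s) ∧
      r ((nextFun V1 σ1 σ2)^[i] s) (nextFun V1 σ1 σ2 ((nextFun V1 σ1 σ2)^[i] s)) ≤ 0)
    (hr : ∀ u ∈ V1, ∀ v, E u v → 0 ≤ r u v) (hσ1' : ∀ u ∈ V1, E u (σ1' u))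
    (hσ2 : ∀ v ∈ V2, v ∉ playPrefix (nextFun V1 σ1 σ2) s k → 0 ≤ r v (σ2 v)) :
    playCost E r (nextFun V1 σ1 σ2) s ≤ playCost E r (nextFun V1 σ1' σ2) s := by
  refine playCost_le_playCost_of_negative_steps hk hplay fun v hv => ?_
  by_cases hv1 : v ∈ V1
  · simp only [nextFun, if_pos hv1]
    exact .inl (hr v hv1 _ (hσ1' v hv1))
  simp only [nextFun, if_neg hv1]
  by_cases hvP : v ∈ playPrefix (nextFun V1 σ1 σ2) s k
  · exact .inr ⟨hvP, trivial⟩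
  · exact .inl (hσ2 v ((hplayer v hv).resolve_left hv1) hvP)

theorem playCost_le_playCost_nextFun_right {σ2' : V → V}
    (hplayer : ∀ v, ¬ IsTerm E v → v ∈ V1 ∨ v ∈ V2)
    (hk : IsTerm E ((nextFun V1 σ1 σ2)^[k] s))
    (hplay : ∀ i < k, ¬ IsTerm E ((nextFun V1 σ1 σ2)^[i] s) ∧
      r ((nextFun V1 σ1 σ2)^[i] s) (nextFun V1 σ1 σ2 ((nextFun V1 σ1 σ2)^[i] s)) ≤ 0)
    (hr : ∀ u ∈ V2, ∀ v, E u v → 0 ≤ r u v) (hσ2' : ∀ u ∈ V2, E u (σ2' u))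
    (hσ1 : ∀ v ∈ V1, v ∉ playPrefix (nextFun V1 σ1 σ2) s k → 0 ≤ r v (σ1 v)) :
    playCost E r (nextFun V1 σ1 σ2) s ≤ playCost E r (nextFun V1 σ1 σ2') s := by
  refine playCost_le_playCost_of_negative_steps hk hplay fun v hv => ?_
  by_cases hv1 : v ∈ V1
  · simp only [nextFun, if_pos hv1]
    by_cases hvP : v ∈ playPrefix (nextFun V1 σ1 σ2) s k
    · exact .inr ⟨hvP, trivial⟩
    · exact .inl (hσ1 v hv1 hvP)
  have hv2 := (hplayer v hv).resolve_left hv1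
  simp only [nextFun, if_neg hv1]
  exact .inl (hr v hv2 _ (hσ2' v hv2))

end Deviation

theorem isNE_piecewise_playPrefix {V1 V2 : Set V} {r1 r2 : V → V → ℝ} {s t : V}
    {g p1 p2 : V → V} {k : ℕ} (hV : ∀ v, v ∈ V1 ∨ v ∈ V2 ∨ v = t) (ht : IsTerm E t)
    (hr1 : ∀ u ∈ V1, ∀ v, E u v → 0 ≤ r1 u v) (hr2 : ∀ u ∈ V2, ∀ v, E u v → 0 ≤ r2 u v)
    (hk : g^[k] s = t)
    (hg : ∀ v ∈ playPrefix g s k, E v (g v) ∧ r1 v (g v) ≤ 0 ∧ r2 v (g v) ≤ 0)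
    (hp1 : ∀ u ∈ V2, E u (p1 u) ∧ r1 u (p1 u) = 0) (hp2 : ∀ u ∈ V1, E u (p2 u) ∧ r2 u (p2 u) = 0) :
    IsNE E V1 V2 r1 r2 s ((playPrefix g s k).piecewise g p2) ((playPrefix g s k).piecewise g p1) ∧
      (nextFun V1 ((playPrefix g s k).piecewise g p2) ((playPrefix g s k).piecewise g p1))^[k] s
        = t := by
  set P := playPrefix g s k
  set f := nextFun V1 (P.piecewise g p2) (P.piecewise g p1)
  have hfg : ∀ v ∈ P, f v = g v := fun v hv => by
    simp only [f, nextFun, Finset.piecewise_eq_of_mem _ _ _ hv, ite_self]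
  have hplay : ∀ i ≤ k, f^[i] s = g^[i] s :=
    Function.iterate_eq_iterate_of_eqOn_orbit fun i hi => hfg _ (mem_playPrefix.2 ⟨i, hi, rfl⟩)
  have hPf : playPrefix f s k = P := playPrefix_congr hplay
  have hfk : IsTerm E (f^[k] s) := by rwa [hplay k le_rfl, hk]
  have hsteps : ∀ i < k, ¬ IsTerm E (f^[i] s) ∧
      r1 (f^[i] s) (f (f^[i] s)) ≤ 0 ∧ r2 (f^[i] s) (f (f^[i] s)) ≤ 0 := fun i hi => by
    have hmem : f^[i] s ∈ P := hPf ▸ mem_playPrefix.2 ⟨i, hi, rfl⟩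
    obtain ⟨hE, h1, h2⟩ := hg _ hmem
    rw [hfg _ hmem]
    exact ⟨fun hterm => hterm _ hE, h1, h2⟩
  have hplayer : ∀ v, ¬ IsTerm E v → v ∈ V1 ∨ v ∈ V2 := fun v hv => by
    rcases hV v with h | h | rfl
    exacts [.inl h, .inr h, absurd ht hv]
  have hlegal : ∀ p : V → V, ∀ u, E u (p u) → E u (P.piecewise g p u) := fun p u hu => by
    by_cases huP : u ∈ P
    · rw [Finset.piecewise_eq_of_mem _ _ _ huP]; exact (hg u huP).1
    · rwa [Finset.piecewise_eq_of_notMem _ _ _ huP]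
  refine ⟨⟨fun u hu => hlegal p2 u (hp2 u hu).1, fun u hu => hlegal p1 u (hp1 u hu).1, ?_, ?_⟩,
    hk ▸ hplay k le_rfl⟩
  · refine fun σ1' hσ1' => playCost_le_playCost_nextFun_left hplayer hfk
      (fun i hi => ⟨(hsteps i hi).1, (hsteps i hi).2.1⟩) hr1 hσ1' fun v hv2 hvP => ?_
    rw [hPf] at hvP
    rw [Finset.piecewise_eq_of_notMem _ _ _ hvP, (hp1 v hv2).2]
  · refine fun σ2' hσ2' => playCost_le_playCost_nextFun_right hplayer hfk
      (fun i hi => ⟨(hsteps i hi).1, (hsteps i hi).2.2⟩) hr2 hσ2' fun v hv1 hvP => ?_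
    rw [hPf] at hvP
    rw [Finset.piecewise_eq_of_notMem _ _ _ hvP, (hp2 v hv1).2]

theorem SP_game_L1_L2_L3_terminal_NE_general [Fintype V]
    (E : V → V → Prop) (V1 V2 : Set V) (s t : V) (r1 r2 : V → V → ℝ)
    (hV : ∀ v : V, v ∈ V1 ∨ v ∈ V2 ∨ v = t)
    (htermt : IsTerm E t)
    (hA2 : ∀ c, IsCycleL E c → 0 < pathCost r1 c ∧ 0 < pathCost r2 c)
    -- (L1) for player 1 and player 2
    (hL1₁ : ∀ u ∈ V1, (∃ v, E u v ∧ r1 u v = 0) ∧ ∀ v, E u v → 0 ≤ r1 u v)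
    (hL1₂ : ∀ u ∈ V2, (∃ v, E u v ∧ r2 u v = 0) ∧ ∀ v, E u v → 0 ≤ r2 u v)
    -- (L2) for player 1 and player 2
    (hL2₁ : ∀ u ∈ V1, ∃ v, E u v ∧ r1 u v = 0 ∧ r2 u v ≤ 0)
    (hL2₂ : ∀ u ∈ V2, ∃ v, E u v ∧ r2 u v = 0 ∧ r1 u v ≤ 0)
    -- (L3) for player 1 and player 2
    (hL3₁ : ∀ u ∈ V1, ∃ v, E u v ∧ r2 u v = 0)
    (hL3₂ : ∀ u ∈ V2, ∃ v, E u v ∧ r1 u v = 0) :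
    ∃ σ1 σ2 : V → V, IsNE E V1 V2 r1 r2 s σ1 σ2 ∧
      ∃ n, (nextFun V1 σ1 σ2)^[n] s = t := by
  have hcoop : ∀ v ≠ t, ∃ w, E v w ∧ r1 v w ≤ 0 ∧ r2 v w ≤ 0 := fun v hv => by
    rcases hV v with h | h | rfl
    · obtain ⟨w, hw, h1, h2⟩ := hL2₁ v h
      exact ⟨w, hw, h1.le, h2⟩
    · obtain ⟨w, hw, h2, h1⟩ := hL2₂ v h
      exact ⟨w, hw, h1, h2.le⟩
    · exact absurd rfl hv
  choose! g hg using hcoop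
  choose! p1 hp1 using hL3₂
  choose! p2 hp2 using hL3₁
  have hreach : ∃ n, g^[n] s = t := exists_iterate_eq_of_pathCost_pos
    (fun v hv => ⟨(hg v hv).1, (hg v hv).2.1⟩) (fun c hc => (hA2 c hc).1) s
  have hpath : ∀ v ∈ playPrefix g s (Nat.find hreach), E v (g v) ∧ r1 v (g v) ≤ 0 ∧ r2 v (g v) ≤ 0 := by
    intro v hv
    obtain ⟨i, hi, rfl⟩ := mem_playPrefix.1 hv
    exact hg _ (Nat.find_min hreach hi)
  obtain ⟨hNE, hterm⟩ := isNE_piecewise_playPrefix hV htermt (fun u hu => (hL1₁ u hu).2)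
    (fun u hu => (hL1₂ u hu).2) (Nat.find_spec hreach) hpath hp1 hp2
  exact ⟨_, _, hNE, _, hterm⟩

/-- a finite two-person shortest-path game in which (A1) every vertex has a
path to the terminal `t`, (A2) every directed cycle has positive total length for both
players, and the lengths satisfy (L1), (L2), (L3) for both players, has a terminal Nash
equilibrium in pure stationary strategies. -/
theorem SP_game_L1_L2_L3_terminal_NE [Fintype V]
    (E : V → V → Prop) (V1 V2 : Set V) (s t : V) (r1 r2 : V → V → ℝ)
    (hV : ∀ v : V, v ∈ V1 ∨ v ∈ V2 ∨ v = t)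
    (hdisj : Disjoint V1 V2) (ht1 : t ∉ V1) (ht2 : t ∉ V2)
    (htermt : IsTerm E t)
    (hA1 : ∀ u : V, Relation.ReflTransGen E u t)
    (hA2 : ∀ c, IsCycleL E c → 0 < pathCost r1 c ∧ 0 < pathCost r2 c)
    -- (L1) for player 1 and player 2
    (hL1₁ : ∀ u ∈ V1, (∃ v, E u v ∧ r1 u v = 0) ∧ ∀ v, E u v → 0 ≤ r1 u v)
    (hL1₂ : ∀ u ∈ V2, (∃ v, E u v ∧ r2 u v = 0) ∧ ∀ v, E u v → 0 ≤ r2 u v)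
    -- (L2) for player 1 and player 2
    (hL2₁ : ∀ u ∈ V1, ∃ v, E u v ∧ r1 u v = 0 ∧ r2 u v ≤ 0)
    (hL2₂ : ∀ u ∈ V2, ∃ v, E u v ∧ r2 u v = 0 ∧ r1 u v ≤ 0)
    -- (L3) for player 1 and player 2
    (hL3₁ : ∀ u ∈ V1, ∃ v, E u v ∧ r2 u v = 0)
    (hL3₂ : ∀ u ∈ V2, ∃ v, E u v ∧ r1 u v = 0) :
    ∃ σ1 σ2 : V → V, IsNE E V1 V2 r1 r2 s σ1 σ2 ∧
      ∃ n, (nextFun V1 σ1 σ2)^[n] s = t :=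
  SP_game_L1_L2_L3_terminal_NE_general E V1 V2 s t r1 r2 hV htermt hA2 hL1₁ hL1₂ hL2₁ hL2₂ hL3₁ hL3₂
end

section
/- Let G = (V, E) be a finite directed graph with terminal t, V \ {t} = V₁ ∪ V₂, and arc lengths r : E → ℝ such that every directed cycle has positive total length, and suppose every vertex in V₂ has at least one outgoing arc. Suppose r satisfies: r(u,v) ≥ 0 for all arcs leaving vertices of V₁, and for every u ∈ V₂ some arc (u,v) has r(u,v) = 0 and all arcs leaving u have r(u,v) ≤ 0 allowed only as stated, i.e. every arc leaving V₂ has r ≤ 0. Let p be a directed (s,t)-path all of whose arcs have r-length ≤ 0, and let p' be any other directed (s,t)-path that agrees with p on arcs leaving V₂ ∩ V(p) and uses only arcs of r-length 0 when leaving vertices of V₂ \ V(p). Then the total r-length of p' is at least the total r-length of p. -/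
open scoped Classical

variable {V : Type*}

/-- A directed (simple) path from `s` to `t`, as a list of vertices. -/
def IsPathL (E : V → V → Prop) (s t : V) (p : List V) : Prop :=
  List.Chain' E p ∧ p.head? = some s ∧ p.getLast? = some t ∧ p.Nodup

/-- `(u,v)` is an arc of the path `p` (a consecutive pair of vertices). -/
def ArcOf (p : List V) (u v : V) : Prop := (u, v) ∈ p.zip p.tail

/-!
Both paths are simple, so their lengths are sums over their arc sets, and comparing them
reduces to comparing the arcs of `p` missing from `p'` with the arcs of `p'` missing from `p`.
The former have nonpositive length by assumption on `p`. The latter have nonnegative length: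
an arc of `p'` leaving `V₁` has nonnegative length, no arc leaves `t`, and an arc of `p'`
leaving `u ∈ V₂` is either an arc of `p` (if `u` lies on `p`) or has length zero.
-/

theorem ArcOf.rel {E : V → V → Prop} {p : List V} (hp : p.IsChain E) {u v : V}
    (h : ArcOf p u v) : E u v := by
  induction hp with
  | nil | singleton => simp [ArcOf] at h
  | cons_cons hab _ ih =>
    simp only [ArcOf, List.tail_cons, List.zip_cons_cons, List.mem_cons, Prod.mk.injEq] at h
    rcases h with ⟨rfl, rfl⟩ | h
    exacts [hab, ih h]

theorem List.Nodup.zip_tail {p : List V} (hp : p.Nodup) : (p.zip p.tail).Nodup :=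
  .of_map Prod.snd <| by
    rw [List.map_snd_zip (by cases p <;> simp)]
    exact hp.sublist p.tail_sublist

def arcSet [DecidableEq V] (p : List V) : Finset (V × V) := (p.zip p.tail).toFinset

theorem mem_arcSet [DecidableEq V] {p : List V} {a : V × V} :
    a ∈ arcSet p ↔ ArcOf p a.1 a.2 :=
  List.mem_toFinset

theorem pathCost_eq_sum_arcSet [DecidableEq V] (r : V → V → ℝ) {p : List V} (hp : p.Nodup) :
    pathCost r p = ∑ a ∈ arcSet p, r a.1 a.2 :=
  (List.sum_toFinset _ hp.zip_tail).symm

theorem pathCost_le_pathCost_of_sdiff (r : V → V → ℝ) {p p' : List V}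
    (hp : p.Nodup) (hp' : p'.Nodup)
    (hleft : ∀ u v, ArcOf p u v → ¬ ArcOf p' u v → r u v ≤ 0)
    (hright : ∀ u v, ArcOf p' u v → ¬ ArcOf p u v → 0 ≤ r u v) :
    pathCost r p ≤ pathCost r p' := by
  classical
  rw [pathCost_eq_sum_arcSet r hp, pathCost_eq_sum_arcSet r hp', ← Finset.sum_sdiff_le_sum_sdiff]
  refine (Finset.sum_nonpos fun a ha => ?_).trans (Finset.sum_nonneg fun a ha => ?_)
  · rw [Finset.mem_sdiff, mem_arcSet, mem_arcSet] at ha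
    exact hleft _ _ ha.1 ha.2
  · rw [Finset.mem_sdiff, mem_arcSet, mem_arcSet] at ha
    exact hright _ _ ha.1 ha.2

theorem deviation_not_improving_general
    (E : V → V → Prop) (V1 V2 : Set V) (s t : V) (r : V → V → ℝ)
    (hV : ∀ v : V, v ∈ V1 ∨ v ∈ V2 ∨ v = t)
    (htermt : ∀ w, ¬ E t w)
    (hV1nonneg : ∀ u ∈ V1, ∀ v, E u v → 0 ≤ r u v)
    (p p' : List V)
    (hp : IsPathL E s t p) (hp' : IsPathL E s t p')
    (hpneg : ∀ u v, ArcOf p u v → r u v ≤ 0)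
    (hagree : ∀ u v', ArcOf p' u v' → u ∈ V2 → u ∈ p → ArcOf p u v')
    (hzero : ∀ u v', ArcOf p' u v' → u ∈ V2 → u ∉ p → r u v' = 0) :
    pathCost r p ≤ pathCost r p' := by
  refine pathCost_le_pathCost_of_sdiff r hp.2.2.2 hp'.2.2.2 (fun u v h _ => hpneg u v h)
    fun u v h' hnot => ?_
  have hE : E u v := h'.rel hp'.1
  rcases hV u with hu | hu | rfl
  · exact hV1nonneg u hu v hE
  · exact (hzero u v h' hu fun hup => hnot (hagree u v h' hu hup)).ge
  · exact absurd hE (htermt v)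

/-- exchange argument in Lemma 2.1: let all cycles have positive total
`r`-length, arcs leaving `V₁` have nonnegative `r`-length, arcs leaving `V₂` have
nonpositive `r`-length with an `r`-zero arc available at every `u ∈ V₂`.  If `p` is an
`(s,t)`-path all of whose arcs have nonpositive `r`-length, and `p'` is an `(s,t)`-path
that agrees with `p` on arcs leaving `V₂ ∩ V(p)` and uses only `r`-zero arcs when leaving
vertices of `V₂ \ V(p)`, then the total `r`-length of `p'` is at least that of `p`. -/
theorem deviation_not_improving [Fintype V]
    (E : V → V → Prop) (V1 V2 : Set V) (s t : V) (r : V → V → ℝ)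
    (hV : ∀ v : V, v ∈ V1 ∨ v ∈ V2 ∨ v = t)
    (hdisj : Disjoint V1 V2) (ht1 : t ∉ V1) (ht2 : t ∉ V2)
    (htermt : ∀ w, ¬ E t w)
    (hout2 : ∀ u ∈ V2, ∃ v, E u v)
    (hcyc : ∀ c, IsCycleL E c → 0 < pathCost r c)
    (hV1nonneg : ∀ u ∈ V1, ∀ v, E u v → 0 ≤ r u v)
    (hV2zero : ∀ u ∈ V2, ∃ v, E u v ∧ r u v = 0)
    (hV2nonpos : ∀ u ∈ V2, ∀ v, E u v → r u v ≤ 0)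
    (p p' : List V)
    (hp : IsPathL E s t p) (hp' : IsPathL E s t p')
    (hpneg : ∀ u v, ArcOf p u v → r u v ≤ 0)
    (hagree : ∀ u v', ArcOf p' u v' → u ∈ V2 → u ∈ p → ArcOf p u v')
    (hzero : ∀ u v', ArcOf p' u v' → u ∈ V2 → u ∉ p → r u v' = 0) :
    pathCost r p ≤ pathCost r p' :=
  deviation_not_improving_general E V1 V2 s t r hV htermt hV1nonneg p p' hp hp' hpneg hagree hzero
end
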